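/- Let p be a prime and l a power of p. Then for each i, the polynomial f_i ∈ ℤ[u_1, …, u_{n-1}] defined by σ_i(x_1^l, …, x_n^l) = F_i(σ_1, …, σ_n) with f_i = F_i(u_1, …, u_{n-1}, 1) satisfies f_i ≡ u_i^l (mod p). -/

import Mathlib

/-!
Reduce modulo `p`. Over `𝔽_p` the `l`-th power map is a ring endomorphism fixing the
coefficients, so `σ_i(x_1^l, …, x_n^l) = σ_i ^ l`, and since `σ_1, …, σ_n` are algebraically
independent, `F ≡ u_i ^ l (mod p)`. Setting `u_n = 1` leaves `u_i ^ l` unchanged because `i < n`.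
-/

open MvPolynomial

namespace MvPolynomial

theorem expand_prime_pow_zmod {σ : Type*} (p : ℕ) [Fact p.Prime] (e : ℕ)
    (g : MvPolynomial σ (ZMod p)) : expand (p ^ e) g = g ^ p ^ e := by
  induction e generalizing g with
  | zero => simp
  | succ e ih => rw [pow_succ, expand_mul, expand_zmod, ih, ← pow_mul, mul_comm]

theorem map_aeval_eq_aeval_map {σ τ R S : Type*} [CommRing R] [CommRing S] (φ : R →+* S)
    (g : σ → MvPolynomial τ R) (P : MvPolynomial σ R) :
    map φ (aeval g P) = aeval (fun j => map φ (g j)) (map φ P) := by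
  rw [aeval_eq_bind₁, aeval_eq_bind₁, map_bind₁]

theorem aeval_esymm_injective (R : Type*) [CommRing R] (n : ℕ) :
    Function.Injective
      (aeval (fun j : Fin n => esymm (Fin n) R (j + 1)) : MvPolynomial (Fin n) R → _) := by
  intro a b hab
  refine esymmAlgHom_fin_injective R le_rfl (Subtype.ext ?_)
  rwa [esymmAlgHom_apply, esymmAlgHom_apply]

theorem eq_X_pow_of_aeval_esymm_eq_expand_esymm (p : ℕ) [Fact p.Prime] (e : ℕ) {n : ℕ}
    (k : Fin n) (F : MvPolynomial (Fin n) (ZMod p))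
    (hF : aeval (fun j : Fin n => esymm (Fin n) (ZMod p) (j + 1)) F =
      expand (p ^ e) (esymm (Fin n) (ZMod p) (k + 1))) :
    F = X k ^ p ^ e := by
  apply aeval_esymm_injective
  rw [hF, expand_prime_pow_zmod, map_pow, aeval_X]

end MvPolynomial

theorem stmt15_general (n l p e : ℕ) (hp : p.Prime) (hl : l = p ^ e)
    (i : Fin (n - 1))
    (F : MvPolynomial (Fin n) ℤ)
    (hF : aeval (fun j : Fin n => esymm (Fin n) ℤ ((j : ℕ) + 1)) F =
          aeval (fun j : Fin n => (X j : MvPolynomial (Fin n) ℤ) ^ l)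
            (esymm (Fin n) ℤ ((i : ℕ) + 1)))
    (f : MvPolynomial (Fin (n - 1)) ℤ)
    (hf : f = aeval (fun j : Fin n =>
        if h : (j : ℕ) < n - 1 then (X (⟨j, h⟩ : Fin (n - 1)) : MvPolynomial (Fin (n - 1)) ℤ)
        else 1) F) :
    MvPolynomial.map (Int.castRingHom (ZMod p)) f = X i ^ l := by
  have : Fact p.Prime := ⟨hp⟩
  set φ := Int.castRingHom (ZMod p)
  have hF_mod_p : aeval (fun j : Fin n => esymm (Fin n) (ZMod p) (j + 1)) (map φ F) =
      expand (p ^ e) (esymm (Fin n) (ZMod p) (i + 1)) := by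
    have h := congrArg (map φ) hF
    simp only [map_aeval_eq_aeval_map, map_esymm, map_pow, map_X, hl] at h
    exact h
  rw [hf, map_aeval_eq_aeval_map,
    eq_X_pow_of_aeval_esymm_eq_expand_esymm p e ⟨i, by omega⟩ _ hF_mod_p,
    map_pow, aeval_X, dif_pos i.2, map_X, hl]

/-- let `p` be a prime and `l = p^e` a power of `p`. With `F_i` the unique
polynomial satisfying `σ_i(x_1^l, …, x_n^l) = F_i(σ_1, …, σ_n)` and
`f_i = F_i(u_1, …, u_{n-1}, 1)`, one has `f_i ≡ u_i^l (mod p)`. -/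
theorem stmt15 (n l p e : ℕ) (hp : p.Prime) (hl : l = p ^ e) (hn : 2 ≤ n)
    (i : Fin (n - 1))
    (F : MvPolynomial (Fin n) ℤ)
    (hF : aeval (fun j : Fin n => esymm (Fin n) ℤ ((j : ℕ) + 1)) F =
          aeval (fun j : Fin n => (X j : MvPolynomial (Fin n) ℤ) ^ l)
            (esymm (Fin n) ℤ ((i : ℕ) + 1)))
    (f : MvPolynomial (Fin (n - 1)) ℤ)
    (hf : f = aeval (fun j : Fin n =>
        if h : (j : ℕ) < n - 1 then (X (⟨j, h⟩ : Fin (n - 1)) : MvPolynomial (Fin (n - 1)) ℤ)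
        else 1) F) :
    MvPolynomial.map (Int.castRingHom (ZMod p)) f = X i ^ l :=
  stmt15_general n l p e hp hl i F hF f hf
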